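/- arXiv:2204.08048 — 6 statements merged into one kernel-verified Lean document; each statement's English description precedes it below -/
import Mathlib

section
/- Let $n \geq 1$ and let $A_1,\dots,A_n$ be real numbers with $\sum_{i=1}^n A_i = 2$. Define $C = \tfrac{1}{8}\sum_{i=1}^n A_i^2 - \tfrac{1}{2}$, and set $p_0 = \tfrac{C}{C+1}$ and $p_i = \tfrac{A_i}{2(C+1)}$ for $i=1,\dots,n$. Then $C+1 > 0$, and the Kasner conditions hold: $\sum_{i=0}^{n} p_i = 1$ and $\sum_{i=0}^{n} p_i^2 = 1$. -/
/-! Since `∑ Aᵢ = 2`, the exponents `pᵢ = Aᵢ / (2(C+1))` add up to `1 / (C+1)`, which `p₀ = C/(C+1)`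
completes to `1`. The definition of `C` says exactly `∑ Aᵢ² = 4(2C+1)`, so
`∑ pᵢ² = (C² + 2C + 1) / (C+1)² = 1`; it also gives `C + 1 = (∑ Aᵢ²)/8 + 1/2 > 0`. -/

section KasnerExponents

variable {ι : Type*} [Fintype ι] (A : ι → ℝ) {C : ℝ}

theorem add_one_pos_of_eq_sum_sq_div_eight (hC : C = (1 / 8) * (∑ i, A i ^ 2) - 1 / 2) :
    0 < C + 1 := by
  have : 0 ≤ ∑ i, A i ^ 2 := Finset.sum_nonneg fun i _ => sq_nonneg (A i)
  linarith

theorem div_add_one_add_sum_div_eq_one (hA : ∑ i, A i = 2) (hC : C + 1 ≠ 0) :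
    C / (C + 1) + ∑ i, A i / (2 * (C + 1)) = 1 := by
  rw [← Finset.sum_div, hA]
  field_simp

theorem div_add_one_sq_add_sum_sq_eq_one (hA : ∑ i, A i ^ 2 = 8 * C + 4) (hC : C + 1 ≠ 0) :
    (C / (C + 1)) ^ 2 + ∑ i, (A i / (2 * (C + 1))) ^ 2 = 1 := by
  simp only [div_pow]
  rw [← Finset.sum_div, hA]
  field_simp
  ring

end KasnerExponents

theorem kasner_conditions_general (n : ℕ) (A : Fin n → ℝ)
    (hA : ∑ i, A i = 2)
    (C : ℝ) (hC : C = (1 / 8) * (∑ i, (A i) ^ 2) - 1 / 2)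
    (p : Fin (n + 1) → ℝ)
    (hp0 : p 0 = C / (C + 1))
    (hpi : ∀ i : Fin n, p i.succ = A i / (2 * (C + 1))) :
    0 < C + 1 ∧ (∑ i, p i) = 1 ∧ (∑ i, (p i) ^ 2) = 1 := by
  have hpos := add_one_pos_of_eq_sum_sq_div_eight A hC
  have hsq : ∑ i, A i ^ 2 = 8 * C + 4 := by rw [hC]; ring
  have hsplit (f : ℝ → ℝ) :
      ∑ i, f (p i) = f (C / (C + 1)) + ∑ i, f (A i / (2 * (C + 1))) := by
    simp only [Fin.sum_univ_succ, hp0, hpi]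
  refine ⟨hpos, ?_, ?_⟩
  · exact (hsplit id).trans (div_add_one_add_sum_div_eq_one A hA hpos.ne')
  · exact (hsplit (· ^ 2)).trans (div_add_one_sq_add_sum_sq_eq_one A hsq hpos.ne')

/-- **Kasner conditions for the soliton asymptotics.**
Let `n ≥ 1` and `A₁, …, Aₙ` real with `∑ Aᵢ = 2`. With
`C = (1/8) ∑ Aᵢ² - 1/2`, `p₀ = C/(C+1)` and `pᵢ = Aᵢ/(2(C+1))`,
we have `C + 1 > 0` and the Kasner conditions `∑ pᵢ = 1`, `∑ pᵢ² = 1`. -/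
theorem kasner_conditions (n : ℕ) (hn : 1 ≤ n) (A : Fin n → ℝ)
    (hA : ∑ i, A i = 2)
    (C : ℝ) (hC : C = (1 / 8) * (∑ i, (A i) ^ 2) - 1 / 2)
    (p : Fin (n + 1) → ℝ)
    (hp0 : p 0 = C / (C + 1))
    (hpi : ∀ i : Fin n, p i.succ = A i / (2 * (C + 1))) :
    0 < C + 1 ∧ (∑ i, p i) = 1 ∧ (∑ i, (p i) ^ 2) = 1 :=
  kasner_conditions_general n A hA C hC p hp0 hpi
end

section
/- Let $a < b$ and fix $z \in \mathbb{R}$ with $z \neq a$ and $z \neq b$. Then $\lim_{\rho \to 0^+} \rho\, \partial_\rho U_{[a,b]}(\rho,z) = 2$ if $a < z < b$, while $\lim_{\rho \to 0^+} \rho\, \partial_\rho U_{[a,b]}(\rho,z) = 0$ if $z < a$ or $z > b$. -/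
open Filter Topology

/-- The Green's function `U_{[a,b]}(ρ,z) = log(r_a - z_a) - log(r_b - z_b)` of a uniform
charge distribution along the interval `[a,b]` of the `z`-axis, where
`r_c = √(ρ² + (z-c)²)` and `z_c = z - c`. -/
noncomputable def intervalGreen (a b ρ z : ℝ) : ℝ :=
  Real.log (Real.sqrt (ρ ^ 2 + (z - a) ^ 2) - (z - a)) -
    Real.log (Real.sqrt (ρ ^ 2 + (z - b) ^ 2) - (z - b))

/-!
Each endpoint contributes `log (r - w)` with `w = z - c` and `r = √(ρ² + w²)`. Since
`(r - w)(r + w) = ρ²`, its radial flux is `ρ ∂_ρ log (r - w) = ρ² / (r (r - w)) = 1 + w / r`,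
which tends to `1 + sign w` on the axis: to `2` above the endpoint and to `0` below it.
The two contributions cancel unless `z` lies between the endpoints.
-/

variable {ρ : ℝ}

lemma lt_sqrt_sq_add_sq {w : ℝ} (hρ : ρ ≠ 0) : w < Real.sqrt (ρ ^ 2 + w ^ 2) :=
  (le_abs_self w).trans_lt <| by
    rw [← Real.sqrt_sq_eq_abs]
    exact Real.sqrt_lt_sqrt (sq_nonneg w) (lt_add_of_pos_left _ (by positivity))

lemma hasDerivAt_log_sqrt_sq_add_sq_sub (w : ℝ) (hρ : ρ ≠ 0) :
    HasDerivAt (fun ρ' : ℝ => Real.log (Real.sqrt (ρ' ^ 2 + w ^ 2) - w))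
      (ρ / Real.sqrt (ρ ^ 2 + w ^ 2) / (Real.sqrt (ρ ^ 2 + w ^ 2) - w)) ρ := by
  have hsum : HasDerivAt (fun ρ' : ℝ => ρ' ^ 2 + w ^ 2) (2 * ρ) ρ := by
    simpa using (hasDerivAt_pow 2 ρ).add_const (w ^ 2)
  have hsqrt : HasDerivAt (fun ρ' : ℝ => Real.sqrt (ρ' ^ 2 + w ^ 2))
      (ρ / Real.sqrt (ρ ^ 2 + w ^ 2)) ρ := by
    refine (hsum.sqrt (by positivity)).congr_deriv ?_
    field_simp
  have hpos : Real.sqrt (ρ ^ 2 + w ^ 2) - w ≠ 0 := (sub_pos.2 (lt_sqrt_sq_add_sq hρ)).ne'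
  simpa only [div_eq_inv_mul] using (hsqrt.sub_const w).log hpos

lemma mul_deriv_log_sqrt_sq_add_sq_sub (w : ℝ) (hρ : ρ ≠ 0) :
    ρ * deriv (fun ρ' : ℝ => Real.log (Real.sqrt (ρ' ^ 2 + w ^ 2) - w)) ρ
      = 1 + w / Real.sqrt (ρ ^ 2 + w ^ 2) := by
  rw [(hasDerivAt_log_sqrt_sq_add_sq_sub w hρ).deriv]
  set r := Real.sqrt (ρ ^ 2 + w ^ 2)
  have hr : 0 < r := Real.sqrt_pos.2 (by positivity)
  have hrw : r - w ≠ 0 := (sub_pos.2 (lt_sqrt_sq_add_sq hρ)).ne'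
  have hr2 : r ^ 2 = ρ ^ 2 + w ^ 2 := Real.sq_sqrt (by positivity)
  field_simp
  linear_combination -hr2

lemma div_abs_eq_sign (w : ℝ) : w / |w| = Real.sign w := by
  rcases lt_trichotomy w 0 with hw | rfl | hw
  · rw [abs_of_neg hw, Real.sign_of_neg hw, div_neg, div_self hw.ne]
  · simp
  · rw [abs_of_pos hw, Real.sign_of_pos hw, div_self hw.ne']

lemma tendsto_div_sqrt_sq_add_sq (w : ℝ) :
    Tendsto (fun ρ : ℝ => w / Real.sqrt (ρ ^ 2 + w ^ 2)) (𝓝 0) (𝓝 (Real.sign w)) := by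
  rw [← div_abs_eq_sign]
  rcases eq_or_ne w 0 with rfl | hw
  · simp
  have hcont : ContinuousAt (fun ρ : ℝ => w / Real.sqrt (ρ ^ 2 + w ^ 2)) 0 :=
    continuousAt_const.div (by fun_prop) (by simpa [Real.sqrt_sq_eq_abs] using hw)
  simpa [Real.sqrt_sq_eq_abs] using hcont.tendsto

lemma mul_deriv_intervalGreen (a b z : ℝ) (hρ : ρ ≠ 0) :
    ρ * deriv (fun ρ' : ℝ => intervalGreen a b ρ' z) ρ
      = (z - a) / Real.sqrt (ρ ^ 2 + (z - a) ^ 2) -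
          (z - b) / Real.sqrt (ρ ^ 2 + (z - b) ^ 2) := by
  have hdiff (w : ℝ) := (hasDerivAt_log_sqrt_sq_add_sq_sub w hρ).differentiableAt
  unfold intervalGreen
  rw [deriv_fun_sub (hdiff _) (hdiff _), mul_sub, mul_deriv_log_sqrt_sq_add_sq_sub _ hρ,
    mul_deriv_log_sqrt_sq_add_sq_sub _ hρ]
  ring

theorem tendsto_mul_deriv_intervalGreen (a b z : ℝ) :
    Tendsto (fun ρ : ℝ => ρ * deriv (fun ρ' : ℝ => intervalGreen a b ρ' z) ρ) (𝓝[≠] 0)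
      (𝓝 (Real.sign (z - a) - Real.sign (z - b))) := by
  refine Tendsto.congr'
    (eventually_nhdsWithin_of_forall fun ρ hρ => (mul_deriv_intervalGreen a b z hρ).symm) ?_
  exact ((tendsto_div_sqrt_sq_add_sq _).sub (tendsto_div_sqrt_sq_add_sq _)).mono_left
    nhdsWithin_le_nhds

theorem intervalGreen_radial_flux_general (a b : ℝ) (hab : a < b) (z : ℝ) :
    ((a < z ∧ z < b) →
      Tendsto (fun ρ : ℝ => ρ * deriv (fun ρ' : ℝ => intervalGreen a b ρ' z) ρ)
        (𝓝[>] 0) (𝓝 2)) ∧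
    ((z < a ∨ b < z) →
      Tendsto (fun ρ : ℝ => ρ * deriv (fun ρ' : ℝ => intervalGreen a b ρ' z) ρ)
        (𝓝[>] 0) (𝓝 0)) := by
  have hlim := (tendsto_mul_deriv_intervalGreen a b z).mono_left (nhdsGT_le_nhdsNE 0)
  refine ⟨fun ⟨haz, hzb⟩ => ?_, fun hout => ?_⟩
  · convert hlim using 2
    rw [Real.sign_of_pos (sub_pos.2 haz), Real.sign_of_neg (sub_neg.2 hzb)]
    norm_num
  · convert hlim using 2
    rcases hout with hza | hbz
    · rw [Real.sign_of_neg (sub_neg.2 hza), Real.sign_of_neg (sub_neg.2 (hza.trans hab))]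
      norm_num
    · rw [Real.sign_of_pos (sub_pos.2 (hab.trans hbz)), Real.sign_of_pos (sub_pos.2 hbz)]
      norm_num

/-- **Radial flux of the interval Green's function at the axis.** For `a < b` and
`z ∉ {a, b}`: `ρ ∂_ρ U_{[a,b]}(ρ,z) → 2` as `ρ → 0⁺` if `a < z < b`, while
`ρ ∂_ρ U_{[a,b]}(ρ,z) → 0` as `ρ → 0⁺` if `z < a` or `z > b`. -/
theorem intervalGreen_radial_flux (a b : ℝ) (hab : a < b) (z : ℝ)
    (hza : z ≠ a) (hzb : z ≠ b) :
    ((a < z ∧ z < b) →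
      Tendsto (fun ρ : ℝ => ρ * deriv (fun ρ' : ℝ => intervalGreen a b ρ' z) ρ)
        (𝓝[>] 0) (𝓝 2)) ∧
    ((z < a ∨ b < z) →
      Tendsto (fun ρ : ℝ => ρ * deriv (fun ρ' : ℝ => intervalGreen a b ρ' z) ρ)
        (𝓝[>] 0) (𝓝 0)) :=
  intervalGreen_radial_flux_general a b hab z
end

section
/- Fix $L > 0$, an integer $n \geq 2$, and $i \in \{1,\dots,n\}$. For every $(\rho,z)$ with $\rho > 0$, the renormalized sequence $m \mapsto \sum_{l=-m}^{m} U_{\Gamma_{nl+i}}(\rho,z) + \tfrac{2}{n}\log m$ converges as $m \to \infty$; that is, the renormalized potential $u_i(\rho,z)$ is well defined. -/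
open Filter Topology

/-- The Green's function of the rod `Γ_j = [(j-1)L/n, jL/n]`, `j ∈ ℤ`. -/
noncomputable def rodGreen (L : ℝ) (n : ℕ) (j : ℤ) (ρ z : ℝ) : ℝ :=
  intervalGreen (((j : ℝ) - 1) * L / n) ((j : ℝ) * L / n) ρ z

/-- The renormalized partial sums
`∑_{l=-m}^{m} U_{Γ_{nl+i}}(ρ,z) + (2/n) log m` defining the potential `u_i`. -/
noncomputable def renormSum (L : ℝ) (n i : ℕ) (ρ z : ℝ) (m : ℕ) : ℝ :=
  (∑ l ∈ Finset.Icc (-(m : ℤ)) (m : ℤ), rodGreen L n ((n : ℤ) * l + (i : ℤ)) ρ z) +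
    (2 / (n : ℝ)) * Real.log m

/-! Since `U_{[a,b]}(ρ,z) = -∫_a^b dt / √(ρ² + (z - t)²)`, a rod of length `L/n` at distance
`(m+1)L + O(1)` from the point contributes `-1/(n(m+1)) + O(1/m²)`. The two rods added in passing
from `m` to `m+1` are therefore cancelled, up to `O(1/m²)`, by the renormalization increment
`(2/n)(log(m+1) - log m) = 2/(n(m+1)) + O(1/m²)`. So the increments are summable and the
renormalized sums form a Cauchy sequence. -/

open Real Set

lemma sqrt_sq_add_sq_sub_self_pos {ρ : ℝ} (hρ : ρ ≠ 0) (y : ℝ) : 0 < √(ρ ^ 2 + y ^ 2) - y := by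
  have : |y| < √(ρ ^ 2 + y ^ 2) := by
    rw [← Real.sqrt_sq_eq_abs]
    exact Real.sqrt_lt_sqrt (sq_nonneg y) (lt_add_of_pos_left _ (by positivity))
  linarith [le_abs_self y]

lemma hasDerivAt_log_sqrt_sq_add_sq_sub_s8 {ρ : ℝ} (hρ : ρ ≠ 0) (z t : ℝ) :
    HasDerivAt (fun s => log (√(ρ ^ 2 + (z - s) ^ 2) - (z - s))) (√(ρ ^ 2 + (z - t) ^ 2))⁻¹ t := by
  have hpos : 0 < ρ ^ 2 + (z - t) ^ 2 := by positivity
  have hsub : HasDerivAt (fun s : ℝ => z - s) (-1) t := (hasDerivAt_id t).const_sub z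
  have hsq : HasDerivAt (fun s => ρ ^ 2 + (z - s) ^ 2) (-(2 * (z - t))) t := by
    simpa using (hsub.pow 2).const_add (ρ ^ 2)
  have hlog := ((hsq.sqrt hpos.ne').sub hsub).log (sqrt_sq_add_sq_sub_self_pos hρ (z - t)).ne'
  convert hlog using 1
  · rfl
  rw [Pi.sub_apply]
  have hS := (Real.sqrt_pos.2 hpos).ne'
  have hS' := (sqrt_sq_add_sq_sub_self_pos hρ (z - t)).ne'
  field_simp
  ring

lemma continuous_inv_sqrt_sq_add_sq {ρ : ℝ} (hρ : ρ ≠ 0) (z : ℝ) :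
    Continuous fun t => (√(ρ ^ 2 + (z - t) ^ 2))⁻¹ :=
  (by fun_prop : Continuous fun t => √(ρ ^ 2 + (z - t) ^ 2)).inv₀ fun t =>
    (Real.sqrt_pos.2 (by positivity)).ne'

lemma intervalGreen_eq_neg_integral {ρ : ℝ} (hρ : ρ ≠ 0) (a b z : ℝ) :
    intervalGreen a b ρ z = -∫ t in a..b, (√(ρ ^ 2 + (z - t) ^ 2))⁻¹ := by
  rw [intervalIntegral.integral_eq_sub_of_hasDerivAt
    (fun t _ => hasDerivAt_log_sqrt_sq_add_sq_sub_s8 hρ z t)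
    ((continuous_inv_sqrt_sq_add_sq hρ z).intervalIntegrable a b)]
  simp [intervalGreen]

lemma abs_inv_sqrt_sq_add_sq_sub_inv_le {ρ z t R δ : ℝ} (hR : 0 < R)
    (hRzδ : 2 * (|z| + δ) ≤ R) (ht : |(|t|) - R| ≤ δ) :
    |(√(ρ ^ 2 + (z - t) ^ 2))⁻¹ - R⁻¹| ≤ 2 * (|ρ| + |z| + δ) / R ^ 2 := by
  set S := √(ρ ^ 2 + (z - t) ^ 2)
  have hS_ge : |z - t| ≤ S := Real.abs_le_sqrt (le_add_of_nonneg_left (sq_nonneg ρ))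
  have hS_le : S ≤ |ρ| + |z - t| := by
    refine Real.sqrt_le_iff.2 ⟨by positivity, ?_⟩
    nlinarith [sq_abs ρ, sq_abs (z - t), abs_nonneg ρ, abs_nonneg (z - t)]
  have hzt : |(|z - t|) - (|t|)| ≤ |z| := by
    simpa using abs_abs_sub_abs_le_abs_sub (z - t) (-t)
  rw [abs_le] at ht hzt
  have hS : R / 2 ≤ S := by linarith
  have hSR : |R - S| ≤ |ρ| + |z| + δ := by rw [abs_le]; constructor <;> linarith
  have hSpos : 0 < S := by linarith
  rw [inv_sub_inv hSpos.ne' hR.ne', abs_div, abs_of_pos (mul_pos hSpos hR),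
    div_le_div_iff₀ (mul_pos hSpos hR) (by positivity)]
  nlinarith [mul_le_mul_of_nonneg_right hSR (sq_nonneg R), mul_le_mul_of_nonneg_right hS hR.le,
    abs_nonneg ρ, abs_nonneg z]

lemma abs_intervalGreen_add_le {ρ z a b R δ : ℝ} (hρ : ρ ≠ 0) (hab : a ≤ b) (hR : 0 < R)
    (hRzδ : 2 * (|z| + δ) ≤ R) (h : ∀ t ∈ Icc a b, |(|t|) - R| ≤ δ) :
    |intervalGreen a b ρ z + (b - a) / R| ≤ (b - a) * (2 * (|ρ| + |z| + δ) / R ^ 2) := by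
  have key : -(intervalGreen a b ρ z + (b - a) / R) =
      ∫ t in a..b, ((√(ρ ^ 2 + (z - t) ^ 2))⁻¹ - R⁻¹) := by
    rw [intervalIntegral.integral_sub ((continuous_inv_sqrt_sq_add_sq hρ z).intervalIntegrable a b)
        intervalIntegrable_const,
      intervalIntegral.integral_const, intervalGreen_eq_neg_integral hρ, smul_eq_mul]
    ring
  have hbound : ∀ t ∈ uIoc a b,
      ‖(√(ρ ^ 2 + (z - t) ^ 2))⁻¹ - R⁻¹‖ ≤ 2 * (|ρ| + |z| + δ) / R ^ 2 := by
    intro t ht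
    rw [uIoc_of_le hab] at ht
    exact abs_inv_sqrt_sq_add_sq_sub_inv_le hR hRzδ (h t (Ioc_subset_Icc_self ht))
  rw [← abs_neg, key, mul_comm, ← abs_of_nonneg (sub_nonneg.2 hab)]
  exact intervalIntegral.norm_integral_le_of_norm_le_const hbound

lemma rod_subset_Icc {L : ℝ} (hL : 0 ≤ L) {n i : ℕ} (hi1 : 1 ≤ i) (hin : i ≤ n) (k : ℤ) :
    Icc ((((n * k + i : ℤ) : ℝ) - 1) * L / n) (((n * k + i : ℤ) : ℝ) * L / n) ⊆
      Icc (k * L) ((k + 1) * L) := by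
  have hn : (0 : ℝ) < n := by exact_mod_cast hi1.trans hin
  have hi1' : (1 : ℝ) ≤ i := by exact_mod_cast hi1
  have hin' : (i : ℝ) ≤ n := by exact_mod_cast hin
  rintro t ⟨hlo, hhi⟩
  push_cast at hlo hhi
  rw [div_le_iff₀ hn] at hlo
  rw [le_div_iff₀ hn] at hhi
  constructor <;> nlinarith

lemma abs_rodGreen_add_le {L ρ z R : ℝ} (hL : 0 < L) (hρ : ρ ≠ 0) {n i : ℕ} (hi1 : 1 ≤ i)
    (hin : i ≤ n) (k : ℤ) (hR : 0 < R) (hRz : 2 * (|z| + L) ≤ R)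
    (hk : ∀ t ∈ Icc (k * L) ((k + 1) * L), |(|t|) - R| ≤ L) :
    |rodGreen L n (n * k + i) ρ z + L / n / R| ≤ L / n * (2 * (|ρ| + |z| + L) / R ^ 2) := by
  have hn : (0 : ℝ) < n := by exact_mod_cast hi1.trans hin
  have hlen : ((n * k + i : ℤ) : ℝ) * L / n - (((n * k + i : ℤ) : ℝ) - 1) * L / n = L / n := by
    field_simp
    ring
  have := abs_intervalGreen_add_le hρ (by linarith [div_pos hL hn]) hR hRz
    fun t ht => hk t (rod_subset_Icc hL.le hi1 hin k ht)
  rwa [hlen] at this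

lemma abs_log_add_one_sub_log_sub_inv_le {x : ℝ} (hx : 0 < x) :
    |log (x + 1) - log x - (x + 1)⁻¹| ≤ (x ^ 2)⁻¹ := by
  have hx1 : 0 < (x + 1) / x := by positivity
  have hlo := Real.one_sub_inv_le_log_of_pos hx1
  have hhi := Real.log_le_sub_one_of_pos hx1
  rw [inv_div, Real.log_div (by positivity) hx.ne'] at *
  have e1 : 1 - x / (x + 1) = (x + 1)⁻¹ := by field_simp; ring
  have e2 : (x + 1) / x - 1 = x⁻¹ := by field_simp; ring
  have e3 : x⁻¹ - (x + 1)⁻¹ ≤ (x ^ 2)⁻¹ := by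
    rw [inv_sub_inv hx.ne' (by positivity), div_le_iff₀ (by positivity)]
    field_simp
    nlinarith
  rw [abs_le]
  constructor <;> linarith

lemma renormSum_succ_sub (L : ℝ) (n i : ℕ) (ρ z : ℝ) (m : ℕ) :
    renormSum L n i ρ z (m + 1) - renormSum L n i ρ z m =
      rodGreen L n (n * ((m : ℤ) + 1) + i) ρ z + rodGreen L n (n * (-((m : ℤ) + 1)) + i) ρ z +
        2 / n * (log (m + 1) - log m) := by
  have hIcc : Finset.Icc (-((m : ℤ) + 1)) ((m : ℤ) + 1) =
      insert (-((m : ℤ) + 1)) (insert ((m : ℤ) + 1) (Finset.Icc (-(m : ℤ)) m)) := by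
    ext x
    simp only [Finset.mem_Icc, Finset.mem_insert]
    omega
  have hneg : -((m : ℤ) + 1) ∉ insert ((m : ℤ) + 1) (Finset.Icc (-(m : ℤ)) m) := by
    simp only [Finset.mem_insert, Finset.mem_Icc]
    omega
  have hpos : (m : ℤ) + 1 ∉ Finset.Icc (-(m : ℤ)) m := by
    simp only [Finset.mem_Icc]
    omega
  simp only [renormSum]
  push_cast
  rw [hIcc, Finset.sum_insert hneg, Finset.sum_insert hpos]
  ring

lemma abs_renormSum_succ_sub_le {L ρ z : ℝ} (hL : 0 < L) (hρ : ρ ≠ 0) {n i : ℕ} (hi1 : 1 ≤ i)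
    (hin : i ≤ n) {m : ℕ} (hm : 2 * (|z| + L) ≤ m * L) :
    |renormSum L n i ρ z (m + 1) - renormSum L n i ρ z m| ≤
      (4 * (|ρ| + |z| + L) / L + 2) / n * ((m : ℝ) ^ 2)⁻¹ := by
  have hn : (0 : ℝ) < n := by exact_mod_cast hi1.trans hin
  have hm0 : (0 : ℝ) < m := by nlinarith [abs_nonneg z]
  set R := ((m : ℝ) + 1) * L with hRdef
  have hR : 0 < R := by positivity
  have hRz : 2 * (|z| + L) ≤ R := by linarith
  have hright := abs_rodGreen_add_le hL hρ hi1 hin ((m : ℤ) + 1) hR hRz fun t ⟨h1, h2⟩ => by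
    push_cast at h1 h2
    rw [abs_of_nonneg (show 0 ≤ t by nlinarith), abs_le]
    constructor <;> linarith
  have hleft := abs_rodGreen_add_le hL hρ hi1 hin (-((m : ℤ) + 1)) hR hRz fun t ⟨h1, h2⟩ => by
    push_cast at h1 h2
    rw [abs_of_nonpos (show t ≤ 0 by nlinarith), abs_le]
    constructor <;> linarith
  have hshare : L / n / R = (n : ℝ)⁻¹ * ((m : ℝ) + 1)⁻¹ := by
    rw [hRdef]
    field_simp
  have hrod : L / n * (2 * (|ρ| + |z| + L) / R ^ 2) ≤
      2 * (|ρ| + |z| + L) / L / n * ((m : ℝ) ^ 2)⁻¹ := by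
    calc L / n * (2 * (|ρ| + |z| + L) / R ^ 2)
        = 2 * (|ρ| + |z| + L) / L / n * (((m : ℝ) + 1) ^ 2)⁻¹ := by
          rw [hRdef]
          field_simp
      _ ≤ 2 * (|ρ| + |z| + L) / L / n * ((m : ℝ) ^ 2)⁻¹ := by gcongr; linarith
  have hlog : |2 / n * (log (m + 1) - log m - ((m : ℝ) + 1)⁻¹)| ≤ 2 / n * ((m : ℝ) ^ 2)⁻¹ := by
    rw [abs_mul, abs_of_pos (by positivity)]
    gcongr
    exact abs_log_add_one_sub_log_sub_inv_le hm0
  have hsum : (4 * (|ρ| + |z| + L) / L + 2) / n * ((m : ℝ) ^ 2)⁻¹ =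
      2 * (2 * (|ρ| + |z| + L) / L / n * ((m : ℝ) ^ 2)⁻¹) + 2 / n * ((m : ℝ) ^ 2)⁻¹ := by
    ring
  rw [renormSum_succ_sub, hsum]
  calc _ = |(rodGreen L n (n * ((m : ℤ) + 1) + i) ρ z + L / n / R) +
          (rodGreen L n (n * (-((m : ℤ) + 1)) + i) ρ z + L / n / R) +
          2 / n * (log (m + 1) - log m - ((m : ℝ) + 1)⁻¹)| := by
        rw [hshare]
        congr 1
        ring
    _ ≤ _ + _ + _ := abs_add_three _ _ _
    _ ≤ _ := by linarith

theorem renormSum_converges_general (L : ℝ) (hL : 0 < L) (n : ℕ)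
    (i : ℕ) (hi1 : 1 ≤ i) (hin : i ≤ n) (ρ z : ℝ) (hρ : 0 < ρ) :
    ∃ c : ℝ, Tendsto (fun m : ℕ => renormSum L n i ρ z m) atTop (𝓝 c) := by
  refine cauchySeq_tendsto_of_complete (cauchySeq_of_summable_dist ?_)
  refine Summable.of_norm_bounded_eventually_nat
    ((Real.summable_nat_pow_inv.2 one_lt_two).mul_left ((4 * (|ρ| + |z| + L) / L + 2) / n)) ?_
  obtain ⟨M, hM⟩ := exists_nat_ge (2 * (|z| + L) / L)
  filter_upwards [eventually_ge_atTop M] with m hm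
  have hmz : 2 * (|z| + L) ≤ m * L := (div_le_iff₀ hL).1 (hM.trans (Nat.cast_le.2 hm))
  rw [Real.norm_eq_abs, abs_dist, dist_comm, Real.dist_eq]
  exact abs_renormSum_succ_sub_le hL hρ.ne' hi1 hin hmz

/-- **Convergence of the renormalized potentials.** For `L > 0`, `n ≥ 2`,
`i ∈ {1,…,n}` and any `(ρ,z)` with `ρ > 0`, the renormalized sequence
`m ↦ ∑_{l=-m}^{m} U_{Γ_{nl+i}}(ρ,z) + (2/n) log m` converges as `m → ∞`. -/
theorem renormSum_converges (L : ℝ) (hL : 0 < L) (n : ℕ) (hn : 2 ≤ n)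
    (i : ℕ) (hi1 : 1 ≤ i) (hin : i ≤ n) (ρ z : ℝ) (hρ : 0 < ρ) :
    ∃ c : ℝ, Tendsto (fun m : ℕ => renormSum L n i ρ z m) atTop (𝓝 c) :=
  renormSum_converges_general L hL n i hi1 hin ρ z hρ
end

section
/- Fix $L > 0$ and an integer $n \geq 2$. For all $\rho > 0$ and $z \in \mathbb{R}$, the renormalized potentials satisfy the exact identity $\sum_{i=1}^{n} u_i(\rho,z) = 2\log\rho - 2\log(2L)$. In particular, the static potential $\rho\, e^{-\frac{1}{2}\sum_{i=1}^n u_i}$ of the associated soliton spacetime is the constant $2L$. -/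
open Filter Topology

/-- The renormalized potential
`u_i(ρ,z) = lim_{m→∞} (∑_{l=-m}^{m} U_{Γ_{nl+i}}(ρ,z) + (2/n) log m)`. -/
noncomputable def renormPotential (L : ℝ) (n i : ℕ) (ρ z : ℝ) : ℝ :=
  limUnder atTop (fun m : ℕ => renormSum L n i ρ z m)

/-! Each rod potential is a difference of two values of `arsinh`, so the sum over `i` of the
renormalized partial sums telescopes to `arsinh ((z - (m+1) L)/ρ) - arsinh ((z + m L)/ρ) + 2 log m`,
which tends to `2 log ρ - 2 log (2L)` because `arsinh x - log x → log 2`. The individual limits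
exist because every `u_i - u_j` is an absolutely convergent series over `ℤ`: along each tail of
the axis the rod potentials are monotone (the increments of `arsinh` decrease away from the
origin) and bounded, so the differences within one period are dominated by a telescoping series. -/

open Real Finset

lemma log_sqrt_sq_add_sq_sub {ρ : ℝ} (hρ : 0 < ρ) (t : ℝ) :
    log (√(ρ ^ 2 + t ^ 2) - t) = log ρ - arsinh (t / ρ) := by
  have hsqrt : √(ρ ^ 2 + t ^ 2) = ρ * √(1 + (t / ρ) ^ 2) := by
    rw [← Real.sqrt_sq hρ.le, ← Real.sqrt_mul (sq_nonneg ρ), Real.sqrt_sq hρ.le]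
    congr 1
    field_simp
  have hexp : √(ρ ^ 2 + t ^ 2) - t = ρ * exp (arsinh (-(t / ρ))) := by
    rw [exp_arsinh, neg_sq, hsqrt]
    field_simp
    ring
  rw [hexp, log_mul hρ.ne' (exp_ne_zero _), log_exp, arsinh_neg, sub_eq_add_neg]

lemma intervalGreen_eq_arsinh {ρ : ℝ} (hρ : 0 < ρ) (a b z : ℝ) :
    intervalGreen a b ρ z = arsinh ((z - b) / ρ) - arsinh ((z - a) / ρ) := by
  rw [intervalGreen, log_sqrt_sq_add_sq_sub hρ, log_sqrt_sq_add_sq_sub hρ]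
  ring

lemma antitoneOn_arsinh_add_sub_arsinh {β : ℝ} (hβ : 0 ≤ β) :
    AntitoneOn (fun x => arsinh (x + β) - arsinh x) (Set.Ici 0) := by
  have hderiv : ∀ x, HasDerivAt (fun x => arsinh (x + β) - arsinh x)
      ((√(1 + (x + β) ^ 2))⁻¹ - (√(1 + x ^ 2))⁻¹) x := fun x =>
    ((hasDerivAt_arsinh (x + β)).comp_add_const x β).sub (hasDerivAt_arsinh x)
  refine antitoneOn_of_deriv_nonpos (convex_Ici 0)
    (fun x _ => (hderiv x).continuousAt.continuousWithinAt)
    (fun x _ => (hderiv x).differentiableAt.differentiableWithinAt) fun x hx => ?_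
  rw [interior_Ici, Set.mem_Ioi] at hx
  rw [(hderiv x).deriv, sub_nonpos]
  gcongr
  nlinarith

lemma arsinh_add_sub_arsinh_reflect (β x : ℝ) :
    arsinh (-x - β + β) - arsinh (-x - β) = arsinh (x + β) - arsinh x := by
  rw [show -x - β + β = -x by ring, show -x - β = -(x + β) by ring, arsinh_neg, arsinh_neg]
  ring

lemma monotoneOn_arsinh_add_sub_arsinh {β : ℝ} (hβ : 0 ≤ β) :
    MonotoneOn (fun x => arsinh (x + β) - arsinh x) (Set.Iic (-β)) := by
  intro x hx y hy hxy
  rw [Set.mem_Iic] at hx hy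
  dsimp only
  rw [← arsinh_add_sub_arsinh_reflect β x, ← arsinh_add_sub_arsinh_reflect β y]
  exact antitoneOn_arsinh_add_sub_arsinh hβ (show 0 ≤ -y - β by linarith)
    (show 0 ≤ -x - β by linarith) (by linarith)

noncomputable def rodProfile (c β t : ℝ) : ℝ :=
  arsinh (c - β * t) - arsinh (c - β * t + β)

lemma rodGreen_eq_rodProfile {L ρ : ℝ} {n : ℕ} (hn : 0 < n) (hρ : 0 < ρ) (j : ℤ) (z : ℝ) :
    rodGreen L n j ρ z = rodProfile (z / ρ) (L / (n * ρ)) j := by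
  rw [rodGreen, intervalGreen_eq_arsinh hρ, rodProfile]
  congr 2
  · field_simp
  · field_simp
    ring

lemma rodProfile_nonpos {β : ℝ} (hβ : 0 ≤ β) (c t : ℝ) : rodProfile c β t ≤ 0 :=
  sub_nonpos.2 (arsinh_le_arsinh.2 (le_add_of_nonneg_right hβ))

lemma monotoneOn_rodProfile {β : ℝ} (hβ : 0 < β) (c : ℝ) :
    MonotoneOn (rodProfile c β) (Set.Ici ((|c| + β) / β)) := by
  intro s hs t ht hst
  rw [Set.mem_Ici, div_le_iff₀ hβ] at hs ht
  have hc := le_abs_self c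
  have := monotoneOn_arsinh_add_sub_arsinh hβ.le (show c - β * t ≤ -β by nlinarith)
    (show c - β * s ≤ -β by nlinarith) (by nlinarith : c - β * t ≤ c - β * s)
  simp only [rodProfile] at this ⊢
  linarith

lemma monotoneOn_rodProfile_neg {β : ℝ} (hβ : 0 < β) (c : ℝ) :
    MonotoneOn (fun t => rodProfile c β (-t)) (Set.Ici ((|c| + β) / β)) := by
  intro s hs t ht hst
  rw [Set.mem_Ici, div_le_iff₀ hβ] at hs ht
  have hc := neg_abs_le c
  have := antitoneOn_arsinh_add_sub_arsinh hβ.le (show 0 ≤ c + β * s by nlinarith)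
    (show 0 ≤ c + β * t by nlinarith) (by nlinarith : c + β * s ≤ c + β * t)
  simp only [rodProfile, mul_neg, sub_neg_eq_add] at this ⊢
  linarith

lemma summable_sub_of_monotoneOn {g : ℝ → ℝ} {T C p : ℝ} (hg : MonotoneOn g (Set.Ici T))
    (hC : ∀ x, g x ≤ C) (hp : 0 < p) {q s s' : ℝ} (hs : s ∈ Set.Icc q (q + p))
    (hs' : s' ∈ Set.Icc q (q + p)) :
    Summable fun l : ℕ => g (p * l + s) - g (p * l + s') := by
  obtain ⟨N, hN⟩ := exists_nat_ge ((T - q) / p)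
  rw [div_le_iff₀ hp] at hN
  set a : ℕ → ℝ := fun l => g (p * (l + N : ℕ) + q)
  have hsandwich : ∀ l : ℕ, ∀ σ ∈ Set.Icc q (q + p),
      a l ≤ g (p * (l + N : ℕ) + σ) ∧ g (p * (l + N : ℕ) + σ) ≤ a (l + 1) := by
    intro l σ ⟨hσ₁, hσ₂⟩
    have hl : T ≤ p * (l + N : ℕ) + q := by push_cast; nlinarith [l.cast_nonneg (α := ℝ)]
    have hstep : p * ((l + 1 + N : ℕ) : ℝ) + q = p * (l + N : ℕ) + q + p := by push_cast; ring
    refine ⟨hg hl (show T ≤ _ by linarith) (by linarith),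
      hg (show T ≤ _ by linarith) (show T ≤ _ by rw [hstep]; linarith) (by rw [hstep]; linarith)⟩
  have hd : Summable fun l => a (l + 1) - a l := by
    refine summable_of_sum_range_le (c := C - a 0) (fun l => ?_) fun k => ?_
    · have := hsandwich l q (by simp [hp.le])
      linarith [this.1.trans this.2]
    · rw [sum_range_sub]
      linarith [hC (p * (k + N : ℕ) + q)]
  refine (summable_nat_add_iff N).mp (hd.of_norm_bounded fun l => ?_)
  rw [Real.norm_eq_abs, abs_le]
  have h₁ := hsandwich l s hs
  have h₂ := hsandwich l s' hs'
  constructor <;> linarith [h₁.1, h₁.2, h₂.1, h₂.2]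

lemma summable_int_sub_of_monotoneOn {g : ℝ → ℝ} {T C p : ℝ} (hg : MonotoneOn g (Set.Ici T))
    (hg' : MonotoneOn (fun x => g (-x)) (Set.Ici T)) (hC : ∀ x, g x ≤ C) (hp : 0 < p)
    {s s' : ℝ} (hs : s ∈ Set.Icc 0 p) (hs' : s' ∈ Set.Icc 0 p) :
    Summable fun l : ℤ => g (p * l + s) - g (p * l + s') := by
  have hneg (σ : ℝ) (hσ : σ ∈ Set.Icc 0 p) : -σ ∈ Set.Icc (-p) (-p + p) := by
    simp only [Set.mem_Icc, neg_add_cancel] at hσ ⊢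
    constructor <;> linarith
  refine Summable.of_nat_of_neg ?_ ?_
  · simpa using summable_sub_of_monotoneOn hg hC hp (q := 0) (by simpa using hs) (by simpa using hs')
  · refine (summable_sub_of_monotoneOn hg' (fun x => hC (-x)) hp (hneg s hs) (hneg s' hs')).congr
      fun l => ?_
    simp only [Int.cast_neg, Int.cast_natCast, neg_add, neg_neg, mul_neg]

lemma tendsto_sum_Icc_of_summable {f : ℤ → ℝ} (hf : Summable f) :
    Tendsto (fun m : ℕ => ∑ l ∈ Icc (-(m : ℤ)) m, f l) atTop (𝓝 (∑' l, f l)) :=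
  SummationFilter.hasSum_symmetricIcc_iff.mp (hf.hasSum.mono_left SummationFilter.le_atTop)

lemma renormSum_sub_renormSum (L : ℝ) (n i j : ℕ) (ρ z : ℝ) (m : ℕ) :
    renormSum L n i ρ z m - renormSum L n j ρ z m =
      ∑ l ∈ Icc (-(m : ℤ)) m, (rodGreen L n (n * l + i) ρ z - rodGreen L n (n * l + j) ρ z) := by
  rw [renormSum, renormSum, sum_sub_distrib]
  ring

lemma exists_tendsto_renormSum_sub {L ρ : ℝ} (hL : 0 < L) {n : ℕ} (hn : 0 < n) (hρ : 0 < ρ)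
    {i j : ℕ} (hi : i ≤ n) (hj : j ≤ n) (z : ℝ) :
    ∃ c, Tendsto (fun m => renormSum L n i ρ z m - renormSum L n j ρ z m) atTop (𝓝 c) := by
  have hβ : 0 < L / (n * ρ) := by positivity
  have hsum := summable_int_sub_of_monotoneOn (monotoneOn_rodProfile hβ (z / ρ))
    (monotoneOn_rodProfile_neg hβ (z / ρ)) (rodProfile_nonpos hβ.le (z / ρ))
    (p := n) (by positivity) (s := i) (s' := j) ⟨by positivity, by exact_mod_cast hi⟩
    ⟨by positivity, by exact_mod_cast hj⟩
  refine ⟨_, (tendsto_sum_Icc_of_summable hsum).congr fun m => ?_⟩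
  rw [renormSum_sub_renormSum]
  simp only [rodGreen_eq_rodProfile hn hρ]
  push_cast
  rfl

lemma sum_Icc_neg_sub {M : Type*} [AddCommGroup M] (f : ℤ → M) (m : ℕ) :
    ∑ l ∈ Icc (-(m : ℤ)) m, (f (l + 1) - f l) = f (m + 1) - f (-m) := by
  induction m with
  | zero => simp
  | succ m ih =>
    rw [Nat.cast_succ, sum_Icc_succ_eq_add_endpoints, ih]
    abel_nf

lemma sum_Icc_one_sub {M : Type*} [AddCommGroup M] (f : ℤ → M) (k : ℤ) (n : ℕ) :
    ∑ i ∈ Icc 1 n, (f (k + i) - f (k + i - 1)) = f (k + n) - f k := by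
  induction n with
  | zero => simp
  | succ n ih =>
    rw [sum_Icc_succ_top (by omega), ih]
    push_cast
    abel_nf

lemma sum_renormSum {L ρ : ℝ} {n : ℕ} (hn : 0 < n) (hρ : 0 < ρ) (z : ℝ) (m : ℕ) :
    ∑ i ∈ Icc 1 n, renormSum L n i ρ z m =
      arsinh ((z - (m + 1) * L) / ρ) - arsinh ((z + m * L) / ρ) + 2 * log m := by
  set A : ℤ → ℝ := fun k => arsinh ((z - k * L / n) / ρ)
  have hrod (k : ℤ) : rodGreen L n k ρ z = A k - A (k - 1) := by
    rw [rodGreen, intervalGreen_eq_arsinh hρ]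
    simp only [A, Int.cast_sub, Int.cast_one]
  simp only [renormSum, sum_add_distrib, sum_const, Nat.card_Icc, hrod]
  rw [sum_comm]
  simp only [sum_Icc_one_sub, ← mul_add_one]
  rw [sum_Icc_neg_sub (fun l => A (n * l))]
  have hn' : (n : ℝ) ≠ 0 := by positivity
  simp only [A]
  rw [Nat.add_sub_cancel, nsmul_eq_mul]
  congr 1
  · congr 3
    · push_cast
      field_simp
    · push_cast
      field_simp
      ring
  · field_simp

lemma tendsto_arsinh_sub_log : Tendsto (fun x => arsinh x - log x) atTop (𝓝 (log 2)) := by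
  have hlim : Tendsto (fun x : ℝ => 1 + √((x ^ 2)⁻¹ + 1)) atTop (𝓝 2) := by
    have := ((tendsto_inv_atTop_zero.pow 2).add_const 1).sqrt.const_add 1
    norm_num at this
    exact this
  refine ((continuousAt_log two_ne_zero).tendsto.comp hlim).congr' ?_
  filter_upwards [eventually_gt_atTop 0] with x hx
  have hsq : (x ^ 2)⁻¹ + 1 = (1 + x ^ 2) / x ^ 2 := by field_simp
  rw [Function.comp_apply, hsq, Real.sqrt_div' _ (sq_nonneg x), Real.sqrt_sq hx.le, arsinh,
    ← log_div (by positivity) hx.ne', add_div, div_self hx.ne']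

lemma tendsto_arsinh_mul_add_sub_log {p : ℝ} (hp : 0 < p) (q : ℝ) :
    Tendsto (fun m : ℕ => arsinh (p * m + q) - log m) atTop (𝓝 (log 2 + log p)) := by
  have hinv : Tendsto (fun m : ℕ => (m : ℝ)⁻¹) atTop (𝓝 0) :=
    tendsto_inv_atTop_zero.comp tendsto_natCast_atTop_atTop
  have harg : Tendsto (fun m : ℕ => p * m + q) atTop atTop :=
    tendsto_atTop_add_const_right _ q (tendsto_natCast_atTop_atTop.const_mul_atTop hp)
  have hratio : Tendsto (fun m : ℕ => log (p + q * (m : ℝ)⁻¹)) atTop (𝓝 (log p)) := by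
    have := (hinv.const_mul q).const_add p
    rw [mul_zero, add_zero] at this
    exact (continuousAt_log hp.ne').tendsto.comp this
  refine ((tendsto_arsinh_sub_log.comp harg).add hratio).congr' ?_
  filter_upwards [eventually_gt_atTop 0, harg.eventually_gt_atTop 0] with m hm hpos
  have hm' : (m : ℝ) ≠ 0 := by positivity
  rw [Function.comp_apply, show p + q * (m : ℝ)⁻¹ = (p * m + q) / m by field_simp,
    log_div hpos.ne' hm']
  ring

lemma tendsto_sum_renormSum {L ρ : ℝ} (hL : 0 < L) {n : ℕ} (hn : 0 < n) (hρ : 0 < ρ) (z : ℝ) :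
    Tendsto (fun m => ∑ i ∈ Icc 1 n, renormSum L n i ρ z m) atTop
      (𝓝 (2 * log ρ - 2 * log (2 * L))) := by
  have h₁ := tendsto_arsinh_mul_add_sub_log (div_pos hL hρ) ((L - z) / ρ)
  have h₂ := tendsto_arsinh_mul_add_sub_log (div_pos hL hρ) (z / ρ)
  have hlim : -(log 2 + log (L / ρ)) - (log 2 + log (L / ρ)) = 2 * log ρ - 2 * log (2 * L) := by
    rw [log_div hL.ne' hρ.ne', log_mul two_ne_zero hL.ne']
    ring
  rw [← hlim]
  refine (h₁.neg.sub h₂).congr fun m => ?_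
  rw [sum_renormSum hn hρ, show (z - (m + 1) * L) / ρ = -(L / ρ * m + (L - z) / ρ) by ring,
    arsinh_neg, show (z + m * L) / ρ = L / ρ * m + z / ρ by ring]
  ring

lemma tendsto_renormPotential {L ρ : ℝ} (hL : 0 < L) {n : ℕ} (hn : 0 < n) (hρ : 0 < ρ) {i : ℕ}
    (hi : i ≤ n) (z : ℝ) :
    Tendsto (renormSum L n i ρ z) atTop (𝓝 (renormPotential L n i ρ z)) := by
  refine tendsto_nhds_limUnder ?_
  have hdiff : ∀ j ∈ Icc 1 n, Tendsto (fun m => renormSum L n i ρ z m - renormSum L n j ρ z m)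
      atTop (𝓝 (limUnder atTop fun m => renormSum L n i ρ z m - renormSum L n j ρ z m)) :=
    fun j hj => tendsto_nhds_limUnder (exists_tendsto_renormSum_sub hL hn hρ hi (mem_Icc.1 hj).2 z)
  refine ⟨_, (((tendsto_sum_renormSum hL hn hρ z).add (tendsto_finsetSum _ hdiff)).const_mul
    (n : ℝ)⁻¹).congr fun m => ?_⟩
  rw [← sum_add_distrib]
  simp only [add_sub_cancel, sum_const, Nat.card_Icc, Nat.add_sub_cancel, nsmul_eq_mul]
  field_simp

/-- **Constant lapse identity.** For `L > 0` and `n ≥ 2`, the renormalized potentials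
satisfy `∑_{i=1}^{n} u_i(ρ,z) = 2 log ρ - 2 log(2L)` for all `ρ > 0`, `z ∈ ℝ`.
In particular, the static potential `ρ e^{-(1/2)∑ u_i}` of the associated soliton
spacetime is the constant `2L`. -/
theorem renormPotential_sum (L : ℝ) (hL : 0 < L) (n : ℕ) (hn : 2 ≤ n)
    (ρ z : ℝ) (hρ : 0 < ρ) :
    (∑ i ∈ Finset.Icc 1 n, renormPotential L n i ρ z) =
      2 * Real.log ρ - 2 * Real.log (2 * L) ∧
    ρ * Real.exp (-(1 / 2) * ∑ i ∈ Finset.Icc 1 n, renormPotential L n i ρ z) =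
      2 * L := by
  have hn₀ : 0 < n := by omega
  have hsum : ∑ i ∈ Icc 1 n, renormPotential L n i ρ z = 2 * log ρ - 2 * log (2 * L) :=
    tendsto_nhds_unique
      (tendsto_finsetSum _ fun i hi => tendsto_renormPotential hL hn₀ hρ (mem_Icc.1 hi).2 z)
      (tendsto_sum_renormSum hL hn₀ hρ z)
  refine ⟨hsum, ?_⟩
  rw [hsum, show -(1 / 2 : ℝ) * (2 * log ρ - 2 * log (2 * L)) = log (2 * L) - log ρ by ring,
    exp_sub, exp_log (by positivity), exp_log hρ]
  field_simp
end

section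
/- For every $(\rho,z)$ with $\rho > 0$, $\lim_{a \to \infty} \big( U_{[-a,a]}(\rho,z) + 2\log(2a) \big) = 2\log\rho$. -/
open Filter Topology

lemma sqrt_gt_abs (ρ t : ℝ) (hρ : 0 < ρ) : |t| < Real.sqrt (ρ ^ 2 + t ^ 2) := by
  rw [← Real.sqrt_sq_eq_abs]
  exact Real.sqrt_lt_sqrt (sq_nonneg t) (by nlinarith)

lemma log_sub_eq (ρ t : ℝ) (hρ : 0 < ρ) :
    Real.log (Real.sqrt (ρ ^ 2 + t ^ 2) - t) =
      2 * Real.log ρ - Real.log (Real.sqrt (ρ ^ 2 + t ^ 2) + t) := by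
  have hs := sqrt_gt_abs ρ t hρ
  have h1 : -|t| ≤ t := neg_abs_le t
  have hpos : 0 < Real.sqrt (ρ ^ 2 + t ^ 2) + t := by linarith
  have hsq : Real.sqrt (ρ ^ 2 + t ^ 2) ^ 2 = ρ ^ 2 + t ^ 2 :=
    Real.sq_sqrt (by positivity)
  have hkey : Real.sqrt (ρ ^ 2 + t ^ 2) - t = ρ ^ 2 / (Real.sqrt (ρ ^ 2 + t ^ 2) + t) := by
    rw [eq_div_iff hpos.ne']
    nlinarith
  rw [hkey, Real.log_div (by positivity) hpos.ne', Real.log_pow]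
  push_cast
  ring

lemma tendsto_aux (ρ c : ℝ) :
    Tendsto (fun a : ℝ => (Real.sqrt (ρ ^ 2 + (a + c) ^ 2) + (a + c)) / a) atTop (𝓝 2) := by
  have hc : ContinuousAt (fun x : ℝ => Real.sqrt ((ρ * x) ^ 2 + (1 + c * x) ^ 2) + (1 + c * x)) 0 := by
    fun_prop
  have h1 : Tendsto (fun x : ℝ => Real.sqrt ((ρ * x) ^ 2 + (1 + c * x) ^ 2) + (1 + c * x))
      (𝓝 0) (𝓝 2) := by
    have h := hc.tendsto
    norm_num at h
    exact h
  have h2 := h1.comp tendsto_inv_atTop_zero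
  refine h2.congr' ?_
  filter_upwards [eventually_gt_atTop 0] with a ha
  have ha' : a ≠ 0 := ha.ne'
  have hsq : (ρ * a⁻¹) ^ 2 + (1 + c * a⁻¹) ^ 2 = (ρ ^ 2 + (a + c) ^ 2) / a ^ 2 := by
    field_simp
  have : Real.sqrt ((ρ * a⁻¹) ^ 2 + (1 + c * a⁻¹) ^ 2)
      = Real.sqrt (ρ ^ 2 + (a + c) ^ 2) / a := by
    rw [hsq, Real.sqrt_div' _ (by positivity), Real.sqrt_sq ha.le]
  simp only [Function.comp]
  rw [this]
  field_simp

/-- **Renormalized Green's function of the whole axis.** For every `(ρ,z)` with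
`ρ > 0`:  `lim_{a→∞} (U_{[-a,a]}(ρ,z) + 2 log(2a)) = 2 log ρ`. -/
theorem intervalGreen_whole_axis_limit (ρ z : ℝ) (hρ : 0 < ρ) :
    Tendsto (fun a : ℝ => intervalGreen (-a) a ρ z + 2 * Real.log (2 * a))
      atTop (𝓝 (2 * Real.log ρ)) := by
  have hA := ((Real.continuousAt_log two_ne_zero).tendsto).comp (tendsto_aux ρ z)
  have hB := ((Real.continuousAt_log two_ne_zero).tendsto).comp (tendsto_aux ρ (-z))
  have hsum := (tendsto_const_nhds (x := 2 * Real.log ρ + 2 * Real.log 2)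
    (f := atTop (α := ℝ))).sub (hA.add hB)
  have hval : 2 * Real.log ρ + 2 * Real.log 2 - (Real.log 2 + Real.log 2) = 2 * Real.log ρ := by
    ring
  rw [hval] at hsum
  refine hsum.congr' ?_
  filter_upwards [eventually_gt_atTop 0, eventually_gt_atTop |z|] with a ha haz
  simp only [Function.comp]
  have ha' : a ≠ 0 := ha.ne'
  have hz1 : 0 < a + z := by have := neg_abs_le z; linarith
  have hz2 : 0 < a + -z := by have := le_abs_self z; linarith
  have hApos : 0 < Real.sqrt (ρ ^ 2 + (a + z) ^ 2) + (a + z) := by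
    have := (sqrt_gt_abs ρ (a + z) hρ); have := neg_abs_le (a + z); linarith
  have hBpos : 0 < Real.sqrt (ρ ^ 2 + (a + -z) ^ 2) + (a + -z) := by
    have := (sqrt_gt_abs ρ (a + -z) hρ); have := neg_abs_le (a + -z); linarith
  have e1 : z - -a = a + z := by ring
  have e2 : ρ ^ 2 + (z - a) ^ 2 = ρ ^ 2 + (a + -z) ^ 2 := by ring
  have e3 : Real.log (Real.sqrt (ρ ^ 2 + (z - a) ^ 2) - (z - a))
      = Real.log (Real.sqrt (ρ ^ 2 + (a + -z) ^ 2) + (a + -z)) := by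
    rw [e2]; ring_nf
  have e4 : Real.log (Real.sqrt (ρ ^ 2 + (z - -a) ^ 2) - (z - -a))
      = 2 * Real.log ρ - Real.log (Real.sqrt (ρ ^ 2 + (a + z) ^ 2) + (a + z)) := by
    rw [e1]; exact log_sub_eq ρ (a + z) hρ
  have dA : Real.log ((Real.sqrt (ρ ^ 2 + (a + z) ^ 2) + (a + z)) / a)
      = Real.log (Real.sqrt (ρ ^ 2 + (a + z) ^ 2) + (a + z)) - Real.log a :=
    Real.log_div hApos.ne' ha'
  have dB : Real.log ((Real.sqrt (ρ ^ 2 + (a + -z) ^ 2) + (a + -z)) / a)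
      = Real.log (Real.sqrt (ρ ^ 2 + (a + -z) ^ 2) + (a + -z)) - Real.log a :=
    Real.log_div hBpos.ne' ha'
  have d2 : Real.log (2 * a) = Real.log 2 + Real.log a := Real.log_mul two_ne_zero ha'
  rw [intervalGreen, e3, e4, dA, dB, d2]
  ring
end

section
/- Let $\Omega \subseteq \{(\rho,z) \in \mathbb{R}^2 : \rho > 0\}$ be open, $n \geq 1$, and let $u_1,\dots,u_n$ be twice continuously differentiable on $\Omega$ with $\partial_\rho^2 u_i + \tfrac{1}{\rho}\partial_\rho u_i + \partial_z^2 u_i = 0$ for each $i$. Suppose $\alpha$ is twice continuously differentiable on $\Omega$ and satisfies $\partial_\rho \alpha = \tfrac{\rho}{8}\sum_{i=1}^n \big((\partial_\rho u_i)^2 - (\partial_z u_i)^2\big) - \tfrac{1}{2\rho}$ and $\partial_z \alpha = \tfrac{\rho}{4}\sum_{i=1}^n \partial_\rho u_i\, \partial_z u_i$ on $\Omega$. Then $\partial_\rho^2 \alpha + \partial_z^2 \alpha = -\tfrac{1}{8}\sum_{i=1}^n \big((\partial_\rho u_i)^2 + (\partial_z u_i)^2\big) + \tfrac{1}{2\rho^2}$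 on $\Omega$. -/
/-- The partial derivative `∂_ρ` of a function on the `(ρ,z)` half-plane. -/
noncomputable def pderivRho (f : ℝ × ℝ → ℝ) (p : ℝ × ℝ) : ℝ :=
  fderiv ℝ f p (1, 0)

/-- The partial derivative `∂_z` of a function on the `(ρ,z)` half-plane. -/
noncomputable def pderivZ (f : ℝ × ℝ → ℝ) (p : ℝ × ℝ) : ℝ :=
  fderiv ℝ f p (0, 1)

/-!
Differentiate the two quadrature equations once more: `∂_ρ` the first and `∂_z` the second.
Writing `aᵢ = ∂_ρ uᵢ` and `bᵢ = ∂_z uᵢ`, symmetry of second derivatives gives `∂_z aᵢ = ∂_ρ bᵢ`,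
so the mixed terms cancel in the sum, and the axisymmetric Laplace equation
`∂_ρ aᵢ + ∂_z bᵢ = -aᵢ / ρ` turns what is left into `-(1/4) ∑ aᵢ²`.
-/

open Filter Topology

section PartialDerivatives

variable {f g : ℝ × ℝ → ℝ} {p : ℝ × ℝ}

theorem Filter.EventuallyEq.pderivRho_eq (h : f =ᶠ[𝓝 p] g) : pderivRho f p = pderivRho g p := by
  rw [pderivRho, pderivRho, h.fderiv_eq]

theorem Filter.EventuallyEq.pderivZ_eq (h : f =ᶠ[𝓝 p] g) : pderivZ f p = pderivZ g p := by
  rw [pderivZ, pderivZ, h.fderiv_eq]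

theorem pderivRho_comp_fst {φ : ℝ → ℝ} (hφ : DifferentiableAt ℝ φ p.1) :
    pderivRho (fun q => φ q.1) p = deriv φ p.1 := by
  simp [pderivRho, fderiv_fun_comp p hφ differentiableAt_fst, fderiv_fst]

theorem ContDiffAt.differentiableAt_pderivRho (hf : ContDiffAt ℝ 2 f p) :
    DifferentiableAt ℝ (pderivRho f) p :=
  ((hf.fderiv_right (m := 1) le_rfl).clm_apply contDiffAt_const).differentiableAt one_ne_zero

theorem ContDiffAt.differentiableAt_pderivZ (hf : ContDiffAt ℝ 2 f p) :
    DifferentiableAt ℝ (pderivZ f) p :=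
  ((hf.fderiv_right (m := 1) le_rfl).clm_apply contDiffAt_const).differentiableAt one_ne_zero

theorem ContDiffAt.pderivZ_pderivRho (hf : ContDiffAt ℝ 2 f p) :
    pderivZ (pderivRho f) p = pderivRho (pderivZ f) p := by
  have hdf := (hf.fderiv_right (m := 1) le_rfl).differentiableAt one_ne_zero
  change fderiv ℝ (fun y => fderiv ℝ f y (1, 0)) p (0, 1) =
    fderiv ℝ (fun y => fderiv ℝ f y (0, 1)) p (1, 0)
  simpa [fderiv_clm_apply hdf (differentiableAt_const _)] using
    hf.isSymmSndFDerivAt (by simp) (0, 1) (1, 0)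

end PartialDerivatives

section Quadrature

variable {ι : Type*} [Fintype ι]

theorem pderivRho_quadrature {a b : ι → ℝ × ℝ → ℝ} {p : ℝ × ℝ}
    (ha : ∀ i, DifferentiableAt ℝ (a i) p) (hb : ∀ i, DifferentiableAt ℝ (b i) p)
    (hp : p.1 ≠ 0) :
    pderivRho (fun q => q.1 / 8 * ∑ i, (a i q ^ 2 - b i q ^ 2) - 1 / (2 * q.1)) p =
      (∑ i, (a i p ^ 2 - b i p ^ 2)) / 8 +
        p.1 / 4 * ∑ i, (a i p * pderivRho (a i) p - b i p * pderivRho (b i) p) +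
        1 / (2 * p.1 ^ 2) := by
  have hrecip : pderivRho (fun q : ℝ × ℝ => 1 / (2 * q.1)) p = -(1 / (2 * p.1 ^ 2)) := by
    rw [pderivRho_comp_fst (φ := fun x => 1 / (2 * x)) (by fun_prop (disch := simpa))]
    simp
  unfold pderivRho at hrecip ⊢
  rw [fderiv_fun_sub (by fun_prop) (by fun_prop (disch := simpa)), sub_apply, hrecip]
  simp (disch := fun_prop (disch := assumption)) [div_eq_mul_inv, fderiv_fun_mul, fderiv_fun_sub,
    fderiv_fun_sum, fderiv_fun_pow, fderiv_fst]
  simp only [mul_assoc, ← Finset.mul_sum]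
  ring

theorem pderivZ_quadrature {a b : ι → ℝ × ℝ → ℝ} {p : ℝ × ℝ}
    (ha : ∀ i, DifferentiableAt ℝ (a i) p) (hb : ∀ i, DifferentiableAt ℝ (b i) p) :
    pderivZ (fun q => q.1 / 4 * ∑ i, a i q * b i q) p =
      p.1 / 4 * ∑ i, (a i p * pderivZ (b i) p + b i p * pderivZ (a i) p) := by
  simp (disch := fun_prop (disch := assumption)) [pderivZ, div_eq_mul_inv, fderiv_fun_mul,
    fderiv_fun_sum, fderiv_fst]

/-- Here `a' = ∂_ρ a`, `b' = ∂_z b` and `c = ∂_ρ b = ∂_z a`. -/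
theorem quadrature_laplacian_identity {ρ : ℝ} (hρ : ρ ≠ 0) (a b a' b' c : ι → ℝ)
    (hharm : ∀ i, a' i + 1 / ρ * a i + b' i = 0) :
    (∑ i, (a i ^ 2 - b i ^ 2)) / 8 + ρ / 4 * ∑ i, (a i * a' i - b i * c i) + 1 / (2 * ρ ^ 2) +
        ρ / 4 * ∑ i, (a i * b' i + b i * c i) =
      -(1 / 8) * ∑ i, (a i ^ 2 + b i ^ 2) + 1 / (2 * ρ ^ 2) := by
  have hterm : ∀ i, a i * a' i - b i * c i + (a i * b' i + b i * c i) = -(a i ^ 2 / ρ) := by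
    intro i
    have h := hharm i
    field_simp at h ⊢
    linear_combination a i * h
  have hsum : ρ / 4 * ∑ i, (a i * a' i - b i * c i) + ρ / 4 * ∑ i, (a i * b' i + b i * c i) =
      -(1 / 4) * ∑ i, a i ^ 2 := by
    rw [← mul_add, ← Finset.sum_add_distrib, Finset.sum_congr rfl fun i _ => hterm i,
      Finset.sum_neg_distrib, ← Finset.sum_div]
    field_simp
  rw [Finset.sum_sub_distrib, Finset.sum_add_distrib (f := fun i => a i ^ 2)]
  linear_combination hsum

end Quadrature

theorem laplacian_alpha_general (Ω : Set (ℝ × ℝ)) (hΩ : IsOpen Ω)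
    (hΩpos : ∀ p ∈ Ω, 0 < p.1) (n : ℕ) (u : Fin n → ℝ × ℝ → ℝ)
    (hreg : ∀ i, ContDiffOn ℝ 2 (u i) Ω)
    (hharm : ∀ i, ∀ p ∈ Ω,
      pderivRho (pderivRho (u i)) p + (1 / p.1) * pderivRho (u i) p +
        pderivZ (pderivZ (u i)) p = 0)
    (α : ℝ × ℝ → ℝ)
    (hαρ : ∀ p ∈ Ω, pderivRho α p =
      p.1 / 8 * (∑ i, ((pderivRho (u i) p) ^ 2 - (pderivZ (u i) p) ^ 2)) -
        1 / (2 * p.1))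
    (hαz : ∀ p ∈ Ω, pderivZ α p =
      p.1 / 4 * (∑ i, pderivRho (u i) p * pderivZ (u i) p)) :
    ∀ p ∈ Ω,
      pderivRho (pderivRho α) p + pderivZ (pderivZ α) p =
        -(1 / 8) * (∑ i, ((pderivRho (u i) p) ^ 2 + (pderivZ (u i) p) ^ 2)) +
          1 / (2 * p.1 ^ 2) := by
  intro p hp
  have hρ : p.1 ≠ 0 := (hΩpos p hp).ne'
  have hnhds : Ω ∈ 𝓝 p := hΩ.mem_nhds hp
  have hu : ∀ i, ContDiffAt ℝ 2 (u i) p := fun i => (hreg i).contDiffAt hnhds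
  have hua := fun i => (hu i).differentiableAt_pderivRho
  have hub := fun i => (hu i).differentiableAt_pderivZ
  rw [(eventuallyEq_of_mem hnhds hαρ).pderivRho_eq, (eventuallyEq_of_mem hnhds hαz).pderivZ_eq,
    pderivRho_quadrature hua hub hρ, pderivZ_quadrature hua hub]
  simp only [fun i => (hu i).pderivZ_pderivRho]
  exact quadrature_laplacian_identity hρ _ _ _ _ _ fun i => hharm i p hp

/-- **Flat Laplacian of the quadrature coefficient `α`.** Let `Ω ⊆ {ρ > 0}` be open,
`u₁, …, uₙ` be `C²` solutions of the axisymmetric Laplace equation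
`∂²_ρ uᵢ + ρ⁻¹ ∂_ρ uᵢ + ∂²_z uᵢ = 0` on `Ω`, and let `α` be `C²` on `Ω` with
`∂_ρ α = (ρ/8) ∑ ((∂_ρ uᵢ)² - (∂_z uᵢ)²) - 1/(2ρ)` and
`∂_z α = (ρ/4) ∑ ∂_ρ uᵢ ∂_z uᵢ` on `Ω`.  Then
`∂²_ρ α + ∂²_z α = -(1/8) ∑ ((∂_ρ uᵢ)² + (∂_z uᵢ)²) + 1/(2ρ²)` on `Ω`. -/
theorem laplacian_alpha (Ω : Set (ℝ × ℝ)) (hΩ : IsOpen Ω)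
    (hΩpos : ∀ p ∈ Ω, 0 < p.1) (n : ℕ) (hn : 1 ≤ n) (u : Fin n → ℝ × ℝ → ℝ)
    (hreg : ∀ i, ContDiffOn ℝ 2 (u i) Ω)
    (hharm : ∀ i, ∀ p ∈ Ω,
      pderivRho (pderivRho (u i)) p + (1 / p.1) * pderivRho (u i) p +
        pderivZ (pderivZ (u i)) p = 0)
    (α : ℝ × ℝ → ℝ) (hα : ContDiffOn ℝ 2 α Ω)
    (hαρ : ∀ p ∈ Ω, pderivRho α p =
      p.1 / 8 * (∑ i, ((pderivRho (u i) p) ^ 2 - (pderivZ (u i) p) ^ 2)) -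
        1 / (2 * p.1))
    (hαz : ∀ p ∈ Ω, pderivZ α p =
      p.1 / 4 * (∑ i, pderivRho (u i) p * pderivZ (u i) p)) :
    ∀ p ∈ Ω,
      pderivRho (pderivRho α) p + pderivZ (pderivZ α) p =
        -(1 / 8) * (∑ i, ((pderivRho (u i) p) ^ 2 + (pderivZ (u i) p) ^ 2)) +
          1 / (2 * p.1 ^ 2) :=
  laplacian_alpha_general Ω hΩ hΩpos n u hreg hharm α hαρ hαz
end
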